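/- On the three-node path a − b − c with T = 2/3 and c < r, the unique action profile achieving full success is all-cooperate, and in that profile the center node b strictly improves its payoff by unilaterally deviating to defection; hence full success and self-fulfilling (Nash) prediction are incompatible on this graph. -/

import Mathlib

open Finset

/-- Threshold number of cooperators required in a group of size `M`: `⌈T·M⌉`. -/
noncomputable def thr (T : ℝ) (M : ℕ) : ℤ := ⌈T * (M : ℝ)⌉

/-- Defector's payoff in a group of size `M` with `k` cooperators. -/
noncomputable def piD (B r T : ℝ) (M k : ℕ) : ℝ :=
  if thr T M ≤ (k : ℤ) then B else (1 - r) * B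

variable {V : Type*} [Fintype V] [DecidableEq V]

/-- Number of cooperating neighbors of `i` (excluding `i` itself). -/
def coopNbrs (G : SimpleGraph V) [DecidableRel G.Adj] (a : V → Bool) (i : V) : ℕ :=
  ((G.neighborFinset i).filter (fun j => a j = true)).card

/-- Number of cooperators in `i`'s group (its neighbors together with `i` itself). -/
def coopCount (G : SimpleGraph V) [DecidableRel G.Adj] (a : V → Bool) (i : V) : ℕ :=
  coopNbrs G a i + (if a i then 1 else 0)

/-- Payoff of agent `i` under action profile `a` in the collective risk dilemma on `G`:
defector's payoff of its group, minus the cost `c·B` if it cooperates. -/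
noncomputable def payoff (G : SimpleGraph V) [DecidableRel G.Adj]
    (B r c T : ℝ) (a : V → Bool) (i : V) : ℝ :=
  piD B r T (G.degree i + 1) (coopCount G a i) - (if a i then c * B else 0)

/-- A strict Nash equilibrium: every unilateral deviation strictly decreases
the deviator's payoff. -/
noncomputable def strictNash (G : SimpleGraph V) [DecidableRel G.Adj]
    (B r c T : ℝ) (a : V → Bool) : Prop :=
  ∀ i, payoff G B r c T (Function.update a i (!a i)) i < payoff G B r c T a i

/-- Full success: every agent's group meets its cooperation threshold. -/
def fullSuccess (G : SimpleGraph V) [DecidableRel G.Adj] (T : ℝ) (a : V → Bool) : Prop :=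
  ∀ i, thr T (G.degree i + 1) ≤ (coopCount G a i : ℤ)

/-- The path graph on three nodes `0 — 1 — 2`. -/
def pathG : SimpleGraph (Fin 3) where
  Adj i j := (i.val + 1 = j.val ∧ j.val ≤ 2) ∨ (j.val + 1 = i.val ∧ i.val ≤ 2)
  symm := ⟨by intro a b h; tauto⟩
  loopless := ⟨by intro a h; omega⟩

instance : DecidableRel pathG.Adj := fun a b =>
  inferInstanceAs (Decidable ((a.val + 1 = b.val ∧ b.val ≤ 2) ∨ (b.val + 1 = a.val ∧ a.val ≤ 2)))

/-- A (weak) Nash equilibrium: no unilateral deviation improves the deviator's payoff. -/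
noncomputable def nash (B r c T : ℝ) (a : Fin 3 → Bool) : Prop :=
  ∀ i, payoff pathG B r c T (Function.update a i (!a i)) i ≤ payoff pathG B r c T a i

lemma nbr0 : pathG.neighborFinset 0 = {1} := by decide
lemma nbr1 : pathG.neighborFinset 1 = {0, 2} := by decide
lemma nbr2 : pathG.neighborFinset 2 = {1} := by decide
lemma deg0 : pathG.degree 0 = 1 := by decide
lemma deg1 : pathG.degree 1 = 2 := by decide
lemma deg2 : pathG.degree 2 = 1 := by decide
lemma thr2 : thr (2/3) 2 = 2 := by unfold thr; norm_num [Int.ceil_eq_iff]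
lemma thr3 : thr (2/3) 3 = 2 := by unfold thr; norm_num [Int.ceil_eq_iff]

lemma coop0 (a : Fin 3 → Bool) :
    coopCount pathG a 0 = (if a 1 then 1 else 0) + (if a 0 then 1 else 0) := by
  unfold coopCount coopNbrs
  rw [nbr0]
  rcases h1 : a 1 <;> simp [Finset.filter_singleton, h1]

lemma coop1 (a : Fin 3 → Bool) :
    coopCount pathG a 1 =
      ((if a 0 then 1 else 0) + (if a 2 then 1 else 0)) + (if a 1 then 1 else 0) := by
  unfold coopCount coopNbrs
  rw [nbr1]
  rcases h0 : a 0 <;> rcases h2 : a 2 <;>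
    simp [Finset.filter_insert, Finset.filter_singleton, h0, h2]

lemma coop2 (a : Fin 3 → Bool) :
    coopCount pathG a 2 = (if a 1 then 1 else 0) + (if a 2 then 1 else 0) := by
  unfold coopCount coopNbrs
  rw [nbr2]
  rcases h1 : a 1 <;> simp [Finset.filter_singleton, h1]

/-- on the three-node path with `T = 2/3` and `c < r`, the unique
profile achieving full success is all-cooperate; in it, the center node strictly
gains by unilaterally defecting; hence full success and strict Nash (self-fulfilling
prediction) are incompatible on this graph. -/
theorem path3_fullSuccess_incompatible_with_nash
    (B r c T : ℝ) (hB : 0 < B) (hc0 : 0 < c) (hcr : c < r) (hr1 : r ≤ 1)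
    (hT : T = 2 / 3) :
    (∀ a : Fin 3 → Bool, fullSuccess pathG T a → a = fun _ => true) ∧
    (payoff pathG B r c T (Function.update (fun _ => true) (1 : Fin 3) false) 1 >
      payoff pathG B r c T (fun _ => true) 1) ∧
    (¬ ∃ a : Fin 3 → Bool, fullSuccess pathG T a ∧ strictNash pathG B r c T a) := by
  subst hT
  have huniq : ∀ a : Fin 3 → Bool, fullSuccess pathG (2/3) a → a = fun _ => true := by
    intro a h
    have h0 := h 0
    have h2 := h 2
    rw [deg0, coop0, thr2] at h0
    rw [deg2, coop2, thr2] at h2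
    funext i
    fin_cases i <;> simp only <;>
      · rcases ha0 : a 0 <;> rcases ha1 : a 1 <;> rcases ha2 : a 2 <;>
          simp [ha0, ha1, ha2] at h0 h2 ⊢
  have hdev : payoff pathG B r c (2/3) (Function.update (fun _ => true) (1 : Fin 3) false) 1 >
      payoff pathG B r c (2/3) (fun _ => true) 1 := by
    have c1 := coop1 (Function.update (fun _ => true) (1 : Fin 3) false)
    have c2 := coop1 (fun _ : Fin 3 => true)
    simp [Function.update] at c1 c2
    unfold payoff piD
    rw [deg1, c1, c2, thr3]
    norm_num
    nlinarith
  refine ⟨huniq, hdev, ?_⟩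
  rintro ⟨a, hfs, hsn⟩
  have ha := huniq a hfs
  subst ha
  have := hsn 1
  simp only [Bool.not_true] at this
  exact absurd hdev (not_lt.mpr this.le)
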